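/- Pruning the transitions of a DATE that are not used by a given ground trace preserves its verdict on that trace: for any ground trace t ∈ Σ*, the DATE reach(D ↾ {d ∈ δ | uses(t, d)}) obtained by keeping only transitions used by t and applying the reachability reduction is equivalent to D with respect to the singleton set {t}. -/

import Mathlib

open Classical

/-- A property automaton over states `Q` and alphabet `E`: a deterministic and
total transition relation is represented as a transition function. -/
structure PA (Q : Type*) (E : Type*) where
  init : Q
  bad : Set Q
  next : Q → E → Q

namespace PA

variable {Q E : Type*}

/-- Iterated application of the transition function along a ground trace. -/
def run (π : PA Q E) (q : Q) (t : List E) : Q := t.foldl π.next q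

/-- A ground trace satisfies a property automaton iff no prefix of it leads
from the initial state to a bad state. -/
def Sat (t : List E) (π : PA Q E) : Prop :=
  ∀ t' : List E, t' <+: t → π.run π.init t' ∉ π.bad

/-- Equivalence of two property automata with respect to a set of ground traces. -/
def EquivOn (T : Set (List E)) (π π' : PA Q E) : Prop :=
  ∀ t ∈ T, Sat t π ↔ Sat t π'

end PA

/-- A static program: a set of static parametrised traces over identifiers `α`,
together with a must-alias equivalence relation and a may-alias relation. -/
structure SProg (α : Type*) (E : Type*) where
  traces : Set (List (α × E))
  must : α → α → Prop
  may : α → α → Prop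
  must_equiv : Equivalence must
  must_sub_may : ∀ {x y : α}, must x y → may x y

namespace SProg

variable {α E : Type*}

-- Projection of a static parametrised trace onto an identifier `x`,
-- yielding the set of possible ground traces.
open Classical in
noncomputable def proj (P : SProg α E) (x : α) : List (α × E) → Set (List E)
  | [] => {[]}
  | (x', e) :: st =>
      if P.must x x' then (e :: ·) '' P.proj x st
      else if P.may x x' then P.proj x st ∪ (e :: ·) '' P.proj x st
      else P.proj x st

/-- The projection of a static program onto a single identifier. -/
def projId (P : SProg α E) (x : α) : Set (List E) :=
  {t | ∃ st ∈ P.traces, t ∈ P.proj x st}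

/-- The projection of a static program onto all identifiers (`P ⇓ OId`). -/
def projAll (P : SProg α E) : Set (List E) :=
  {t | ∃ st ∈ P.traces, ∃ x : α, t ∈ P.proj x st}

end SProg

/-- Satisfaction of a property automaton by a static parametrised trace:
every projection onto every identifier satisfies the automaton. -/
def PA.SSat {α Q E : Type*} (P : SProg α E) (st : List (α × E)) (π : PA Q E) : Prop :=
  ∀ x : α, ∀ t ∈ P.proj x st, PA.Sat t π

/-- Equivalence of two property automata with respect to a static program. -/
def PA.SEquiv {α Q E : Type*} (P : SProg α E) (π π' : PA Q E) : Prop :=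
  ∀ st ∈ P.traces, PA.SSat P st π ↔ PA.SSat P st π'

/-- A transition of a DATE: source state, event, condition, action, target state. -/
structure DTrans (Q : Type*) (E : Type*) (Θ : Type*) where
  src : Q
  ev : E
  cond : Θ → Bool
  act : Θ → Θ
  tgt : Q

/-- A DATE (without timers/channels): states `Q`, events `E`, monitoring
variable states `Θ`, initial state, initial monitoring state, bad states,
and a transition relation. -/
structure DATE (Q : Type*) (E : Type*) (Θ : Type*) where
  init : Q
  th0 : Θ
  bad : Set Q
  delta : Set (DTrans Q E Θ)

namespace DATE

variable {Q E Θ : Type*}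

/-- Determinism: from each state, any two distinct transitions with the same
event have conditions that are never simultaneously true. -/
def Deterministic (D : DATE Q E Θ) : Prop :=
  ∀ d ∈ D.delta, ∀ d' ∈ D.delta,
    d.src = d'.src → d.ev = d'.ev → d ≠ d' →
      ∀ θ : Θ, ¬(d.cond θ = true ∧ d'.cond θ = true)

/-- The concrete transition function `Δ`. -/
noncomputable def step (D : DATE Q E Θ) (s : Q × Θ) (e : E) : Q × Θ :=
  if h : ∃ d ∈ D.delta, d.src = s.1 ∧ d.ev = e ∧ d.cond s.2 = true
  then (h.choose.tgt, h.choose.act s.2)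
  else s

/-- `Δ*`: iterated concrete transition function along a ground trace. -/
noncomputable def run (D : DATE Q E Θ) (s : Q × Θ) (t : List E) : Q × Θ :=
  t.foldl D.step s

/-- A ground trace satisfies a DATE iff no prefix of it drives `Δ*` from the
initial configuration into a bad state. -/
def Sat (t : List E) (D : DATE Q E Θ) : Prop :=
  ∀ t' : List E, t' <+: t → (D.run (D.init, D.th0) t').1 ∉ D.bad

/-- Equivalence of two DATEs with respect to a set of ground traces. -/
def EquivOn (T : Set (List E)) (D D' : DATE Q E Θ) : Prop :=
  ∀ t ∈ T, Sat t D ↔ Sat t D'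

/-- The static transition relation `q →e_approx q'`. -/
def ApproxStep (D : DATE Q E Θ) (q : Q) (e : E) (q' : Q) : Prop :=
  (∃ d ∈ D.delta, d.src = q ∧ d.ev = e ∧ d.tgt = q' ∧ ¬ ∀ θ : Θ, d.cond θ = false)
  ∨ (q' = q ∧ ¬ ∃ d ∈ D.delta, d.src = q ∧ d.ev = e ∧ d.tgt ≠ q ∧ ∀ θ : Θ, d.cond θ = true)

/-- The static transition function on sets of states. -/
def approxSet (D : DATE Q E Θ) (S : Set Q) (e : E) : Set Q :=
  {q' | ∃ q ∈ S, D.ApproxStep q e q'}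

/-- `approxΔ*`: iterated static transition function along a ground trace. -/
def approxRun (D : DATE Q E Θ) (S : Set Q) (t : List E) : Set Q :=
  t.foldl D.approxSet S

/-- `q ↪ q'`: `q'` is reachable from `q` via the static transition relation. -/
def Reach (D : DATE Q E Θ) (q q' : Q) : Prop :=
  ∃ t : List E, q' ∈ D.approxRun {q} t

/-- `badAfter(q)`: `q` is reachable from the initial state and can reach a bad state. -/
def BadAfter (D : DATE Q E Θ) (q : Q) : Prop :=
  D.Reach D.init q ∧ ∃ q' ∈ D.bad, D.Reach q q'

/-- `goodEntryPoint(q)`. -/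
def GoodEntryPoint (D : DATE Q E Θ) (q : Q) : Prop :=
  ¬ D.BadAfter q ∧ ∃ q' : Q, ∃ e : E, D.BadAfter q' ∧ D.ApproxStep q' e q

/-- `useful(q)`. -/
def Useful (D : DATE Q E Θ) (q : Q) : Prop :=
  D.BadAfter q ∨ D.GoodEntryPoint q

/-- Restriction of a DATE to a set of transitions (`D ↾ δ'`). -/
def restrict (D : DATE Q E Θ) (δ' : Set (DTrans Q E Θ)) : DATE Q E Θ :=
  { D with delta := D.delta ∩ δ' }

/-- The reachability-reduced DATE `reach(D)`: only useful states and
transitions between useful states are kept. -/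
def reachReduce (D : DATE Q E Θ) : DATE Q E Θ :=
  D.restrict {d | D.Useful d.src ∧ D.Useful d.tgt}

/-- Alphabet restriction `D ↾ Σ'`. -/
def alphaRestrict (D : DATE Q E Θ) (A : Set E) : DATE Q E Θ :=
  D.restrict {d | d.ev ∈ A}

/-- `Σ(T)`: the set of events occurring in some trace of `T`. -/
def eventsOf (T : Set (List E)) : Set E :=
  {e | ∃ t ∈ T, e ∈ t}

/-- Component-wise union of two DATEs (sharing initial state and initial
monitoring state). -/
def union (D₁ D₂ : DATE Q E Θ) : DATE Q E Θ :=
  { init := D₁.init, th0 := D₁.th0, bad := D₁.bad ∪ D₂.bad,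
    delta := D₁.delta ∪ D₂.delta }

/-- Component-wise union of a family of DATEs, with given initial state and
initial monitoring state. -/
def unionFamily {ι : Type*} (q0 : Q) (θ0 : Θ) (f : ι → DATE Q E Θ) : DATE Q E Θ :=
  { init := q0, th0 := θ0, bad := ⋃ i, (f i).bad, delta := ⋃ i, (f i).delta }

/-- A ground trace `t` uses a transition `d`. -/
def Uses (D : DATE Q E Θ) (t : List E) (d : DTrans Q E Θ) : Prop :=
  (¬ ∀ θ : Θ, d.cond θ = false) ∧
    ∃ t' : List E, (t' ++ [d.ev]) <+: t ∧ d.src ∈ D.approxRun {D.init} t'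

/-- Satisfaction of a DATE by a static parametrised trace. -/
def SSat {α : Type*} (P : SProg α E) (st : List (α × E)) (D : DATE Q E Θ) : Prop :=
  ∀ x : α, ∀ t ∈ P.proj x st, Sat t D

/-- Equivalence of two DATEs with respect to a static program. -/
def SEquiv {α : Type*} (P : SProg α E) (D D' : DATE Q E Θ) : Prop :=
  ∀ st ∈ P.traces, SSat P st D ↔ SSat P st D'

end DATE

/-- Translation of a property automaton into a DATE with `Θ = Unit`:
each transition `(q, e, q')` becomes `q —e|true↦skip→ q'`. -/
def PA.toDATE {Q E : Type*} (π : PA Q E) : DATE Q E Unit :=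
  { init := π.init, th0 := (), bad := π.bad,
    delta := {d | d.cond = (fun _ => true) ∧ d.act = id ∧ d.tgt = π.next d.src d.ev} }

/-- The flow-sensitive residual `residual₂(D, P)`. -/
def DATE.residual2 {α Q E Θ : Type*} (D : DATE Q E Θ) (P : SProg α E) : DATE Q E Θ :=
  (D.restrict {d | ∃ t ∈ P.projAll, D.Uses t d}).reachReduce

/-- Consecutive application of the flow-sensitive residual over a list of
static program over-approximations. -/
def DATE.residual2List {α Q E Θ : Type*} (D : DATE Q E Θ) :
    List (SProg α E) → DATE Q E Θ
  | [] => D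
  | P :: Ps => DATE.residual2List (D.residual2 P) Ps

/-!
The run of a deterministic DATE on a prefix of `t` only ever fires transitions that `t` uses:
the current state is among the states `approxΔ*` reaches on the same prefix, and the fired
transition is the only enabled one. So pruning the unused transitions leaves the run on every
prefix of `t` unchanged.

The reachability reduction preserves the verdict on every trace. While the run stays in
`badAfter` states, the fired transition leads from a `badAfter` state to a `badAfter` state or to a
good entry point, hence is kept, and both runs agree. Once the run leaves the `badAfter` states
it is in a state from which no bad state is statically reachable, and since every concrete step
of `D` or of a restriction of `D` is a static step of `D` (or a stay), neither run can reach a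
bad state afterwards.
-/

namespace DATE

variable {Q E Θ : Type*}

def Enabled (D : DATE Q E Θ) (s : Q × Θ) (e : E) (d : DTrans Q E Θ) : Prop :=
  d ∈ D.delta ∧ d.src = s.1 ∧ d.ev = e ∧ d.cond s.2 = true

def CanReachBad (D : DATE Q E Θ) (q : Q) : Prop :=
  ∃ q' ∈ D.bad, D.Reach q q'

theorem restrict_deterministic {D : DATE Q E Θ} (hdet : D.Deterministic)
    (δ' : Set (DTrans Q E Θ)) : (D.restrict δ').Deterministic :=
  fun d hd d' hd' => hdet d hd.1 d' hd'.1

section Step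

variable (D : DATE Q E Θ) (s : Q × Θ) (e : E)

theorem step_cases :
    (∃ d, D.Enabled s e d ∧ D.step s e = (d.tgt, d.act s.2)) ∨
      ((∀ d, ¬ D.Enabled s e d) ∧ D.step s e = s) := by
  by_cases h : ∃ d, D.Enabled s e d
  · exact Or.inl ⟨h.choose, h.choose_spec, dif_pos h⟩
  · exact Or.inr ⟨not_exists.mp h, dif_neg h⟩

theorem step_of_enabled (hdet : D.Deterministic) {d : DTrans Q E Θ} (hd : D.Enabled s e d) :
    D.step s e = (d.tgt, d.act s.2) := by
  obtain ⟨d', hd', hstep⟩ | ⟨hnone, -⟩ := D.step_cases s e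
  · obtain rfl : d' = d := by_contra fun hne =>
      hdet d' hd'.1 d hd.1 (hd'.2.1.trans hd.2.1.symm) (hd'.2.2.1.trans hd.2.2.1.symm) hne s.2
        ⟨hd'.2.2.2, hd.2.2.2⟩
    exact hstep
  · exact absurd hd (hnone d)

theorem Enabled.approxStep {d : DTrans Q E Θ} (hd : D.Enabled s e d) :
    D.ApproxStep s.1 e d.tgt :=
  Or.inl ⟨d, hd.1, hd.2.1, hd.2.2.1, rfl, fun hfalse => by simpa [hfalse s.2] using hd.2.2.2⟩

theorem approxStep_step : D.ApproxStep s.1 e (D.step s e).1 := by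
  obtain ⟨d, hd, hstep⟩ | ⟨hnone, hstep⟩ := D.step_cases s e
  · rw [hstep]
    exact hd.approxStep
  · rw [hstep]
    exact Or.inr ⟨rfl, fun ⟨d, hd, hsrc, hev, _, htrue⟩ => hnone d ⟨hd, hsrc, hev, htrue s.2⟩⟩

theorem restrict_enabled_iff (δ' : Set (DTrans Q E Θ)) (d : DTrans Q E Θ) :
    (D.restrict δ').Enabled s e d ↔ D.Enabled s e d ∧ d ∈ δ' := by
  simp only [Enabled, restrict, Set.mem_inter_iff]
  tauto

theorem restrict_step_eq (hdet : D.Deterministic) {δ' : Set (DTrans Q E Θ)}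
    (hkept : ∀ d, D.Enabled s e d → d ∈ δ') : (D.restrict δ').step s e = D.step s e := by
  obtain ⟨d, hd, hstep⟩ | ⟨hnone, hstep⟩ := D.step_cases s e
  · rw [hstep]
    exact (D.restrict δ').step_of_enabled s e (restrict_deterministic hdet δ')
      ((D.restrict_enabled_iff s e δ' d).mpr ⟨hd, hkept d hd⟩)
  · rw [hstep]
    obtain ⟨d, hd, -⟩ | ⟨-, hstay⟩ := (D.restrict δ').step_cases s e
    · exact absurd ((D.restrict_enabled_iff s e δ' d).mp hd).1 (hnone d)
    · exact hstay

end Step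

theorem run_append_singleton (D : DATE Q E Θ) (s : Q × Θ) (t : List E) (e : E) :
    D.run s (t ++ [e]) = D.step (D.run s t) e :=
  List.foldl_append

theorem approxRun_append (D : DATE Q E Θ) (S : Set Q) (t₁ t₂ : List E) :
    D.approxRun S (t₁ ++ t₂) = D.approxRun (D.approxRun S t₁) t₂ :=
  List.foldl_append

theorem approxRun_mono (D : DATE Q E Θ) {S S' : Set Q} (h : S ⊆ S') (t : List E) :
    D.approxRun S t ⊆ D.approxRun S' t := by
  induction t generalizing S S' with
  | nil => exact h
  | cons e t ih => exact ih fun _ ⟨q, hq, hstep⟩ => ⟨q, h hq, hstep⟩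

theorem run_mem_approxRun (D : DATE Q E Θ) (t : List E) {S : Set Q} {s : Q × Θ}
    (hs : s.1 ∈ S) : (D.run s t).1 ∈ D.approxRun S t := by
  induction t generalizing S s with
  | nil => exact hs
  | cons e t ih => exact ih ⟨s.1, hs, D.approxStep_step s e⟩

theorem ApproxStep.reach {D : DATE Q E Θ} {q q' : Q} {e : E} (h : D.ApproxStep q e q') :
    D.Reach q q' :=
  ⟨[e], ⟨q, rfl, h⟩⟩

section Reach

variable (D : DATE Q E Θ)

theorem reach_refl (q : Q) : D.Reach q q := ⟨[], rfl⟩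

theorem reach_trans {q q' q'' : Q} (h : D.Reach q q') (h' : D.Reach q' q'') :
    D.Reach q q'' := by
  obtain ⟨t₁, h₁⟩ := h
  obtain ⟨t₂, h₂⟩ := h'
  exact ⟨t₁ ++ t₂, D.approxRun_append _ t₁ t₂ ▸
    D.approxRun_mono (Set.singleton_subset_iff.mpr h₁) t₂ h₂⟩

theorem reach_init_run (t : List E) : D.Reach D.init (D.run (D.init, D.th0) t).1 :=
  ⟨t, D.run_mem_approxRun t rfl⟩

theorem reach_restrict_step (δ' : Set (DTrans Q E Θ)) (s : Q × Θ) (e : E) :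
    D.Reach s.1 ((D.restrict δ').step s e).1 := by
  obtain ⟨d, hd, hstep⟩ | ⟨-, hstep⟩ := (D.restrict δ').step_cases s e
  · rw [hstep]
    exact ((D.restrict_enabled_iff s e δ' d).mp hd).1.approxStep.reach
  · rw [hstep]
    exact D.reach_refl s.1

theorem canReachBad_of_mem_bad {q : Q} (h : q ∈ D.bad) : D.CanReachBad q :=
  ⟨q, h, D.reach_refl q⟩

end Reach

theorem CanReachBad.of_reach {D : DATE Q E Θ} {q q' : Q} (hq : D.Reach q q')
    (h : D.CanReachBad q') : D.CanReachBad q :=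
  let ⟨b, hb, hr⟩ := h
  ⟨b, hb, D.reach_trans hq hr⟩

theorem sat_iff_of_forall_prefix {D D' : DATE Q E Θ} {t : List E}
    (h : ∀ t', t' <+: t → ((D.run (D.init, D.th0) t').1 ∈ D.bad ↔
      (D'.run (D'.init, D'.th0) t').1 ∈ D'.bad)) :
    Sat t D ↔ Sat t D' :=
  forall₂_congr fun t' ht' => not_congr (h t' ht')

theorem run_restrict_uses (D : DATE Q E Θ) (hdet : D.Deterministic) {t t' : List E}
    (ht' : t' <+: t) :
    (D.restrict {d | D.Uses t d}).run (D.init, D.th0) t' = D.run (D.init, D.th0) t' := by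
  induction t' using List.reverseRecOn with
  | nil => rfl
  | append_singleton t' e ih =>
    rw [run_append_singleton, run_append_singleton, ih ((t'.prefix_append [e]).trans ht')]
    refine D.restrict_step_eq _ e hdet fun d ⟨_, hsrc, hev, hcond⟩ => ?_
    refine ⟨fun hfalse => by simp [hfalse] at hcond, t', hev ▸ ht', ?_⟩
    exact hsrc ▸ D.run_mem_approxRun t' rfl

theorem run_reachReduce_cases (D : DATE Q E Θ) (hdet : D.Deterministic) (t : List E) :
    (D.reachReduce.run (D.init, D.th0) t = D.run (D.init, D.th0) t ∧
        D.BadAfter (D.run (D.init, D.th0) t).1) ∨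
      (¬ D.CanReachBad (D.run (D.init, D.th0) t).1 ∧
        ¬ D.CanReachBad (D.reachReduce.run (D.init, D.th0) t).1) := by
  induction t using List.reverseRecOn with
  | nil =>
    by_cases h : D.CanReachBad D.init
    · exact Or.inl ⟨rfl, D.reach_refl _, h⟩
    · exact Or.inr ⟨h, h⟩
  | append_singleton t e ih =>
    simp only [run_append_singleton]
    obtain ⟨heq, hbad⟩ | ⟨hsafe, hsafe'⟩ := ih
    · have hkept : ∀ d, D.Enabled (D.run (D.init, D.th0) t) e d →
          D.Useful d.src ∧ D.Useful d.tgt := fun d hd => by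
        refine ⟨hd.2.1 ▸ Or.inl hbad, ?_⟩
        by_cases hbt : D.BadAfter d.tgt
        · exact Or.inl hbt
        · exact Or.inr ⟨hbt, _, e, hbad, hd.approxStep⟩
      rw [heq, reachReduce,
        D.restrict_step_eq _ e hdet (δ' := {d | D.Useful d.src ∧ D.Useful d.tgt}) hkept,
        ← run_append_singleton]
      by_cases h : D.CanReachBad (D.run (D.init, D.th0) (t ++ [e])).1
      · exact Or.inl ⟨rfl, D.reach_init_run _, h⟩
      · exact Or.inr ⟨h, h⟩
    · exact Or.inr
        ⟨fun h => hsafe (h.of_reach ((D.approxStep_step _ e).reach)),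
          fun h => hsafe' (h.of_reach (D.reach_restrict_step _ _ e))⟩

theorem sat_reachReduce_iff (D : DATE Q E Θ) (hdet : D.Deterministic) (t : List E) :
    Sat t D.reachReduce ↔ Sat t D :=
  sat_iff_of_forall_prefix fun t' _ => by
    obtain ⟨heq, -⟩ | ⟨hsafe, hsafe'⟩ := D.run_reachReduce_cases hdet t'
    · exact heq ▸ Iff.rfl
    · exact iff_of_false (fun h => hsafe' (D.canReachBad_of_mem_bad h))
        (fun h => hsafe (D.canReachBad_of_mem_bad h))

end DATE

/-- Pruning the transitions of a DATE not used by a ground trace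
`t` (and applying the reachability reduction) preserves the verdict on `t`. -/
theorem prune_unused_equiv_singleton {Q E Θ : Type*} (D : DATE Q E Θ)
    (hdet : D.Deterministic) (t : List E) :
    DATE.EquivOn {t} ((D.restrict {d | D.Uses t d}).reachReduce) D := by
  rintro _ rfl
  rw [DATE.sat_reachReduce_iff _ (DATE.restrict_deterministic hdet _)]
  exact DATE.sat_iff_of_forall_prefix fun t' ht' =>
    iff_of_eq (congrArg (·.1 ∈ D.bad) (D.run_restrict_uses hdet ht'))
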